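/- Let g, G : ℝ → ℝ be differentiable with g'(s) ≥ 0 for all s ∈ ℝ and G'(s) = g'(s)·s for all s ∈ ℝ. Then for all a, b ∈ ℝ it holds (g(a) − g(b))·a ≥ G(a) − G(b). -/

import Mathlib

/-!
For fixed `a`, the function `H s = G s - g s * a` has derivative `g'(s) (s - a)`, which is
nonpositive left of `a` and nonnegative right of it. By the first-derivative test `H` attains its
global minimum at `a`, and `H a ≤ H b` is the claimed inequality.
-/

open Set

theorem deriv_sub_mul_const_of_deriv_eq {g G : ℝ → ℝ} (hg : Differentiable ℝ g)
    (hG : Differentiable ℝ G) (hGg : ∀ s : ℝ, deriv G s = deriv g s * s) (a s : ℝ) :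
    deriv (fun t => G t - g t * a) s = deriv g s * (s - a) := by
  rw [deriv_fun_sub (hG s) ((hg s).mul_const a), deriv_mul_const (hg s), hGg s]
  ring

theorem isMinOn_sub_mul_const_of_deriv_eq {g G : ℝ → ℝ} (hg : Differentiable ℝ g)
    (hG : Differentiable ℝ G) (hg' : ∀ s : ℝ, 0 ≤ deriv g s)
    (hGg : ∀ s : ℝ, deriv G s = deriv g s * s) (a : ℝ) :
    IsMinOn (fun t => G t - g t * a) univ a := by
  have hH : Differentiable ℝ fun t => G t - g t * a := hG.sub (hg.mul_const a)
  refine isMinOn_univ_of_deriv hH.continuous.continuousAt hH.differentiableOn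
    hH.differentiableOn (fun s hs => ?_) (fun s hs => ?_)
  all_goals rw [deriv_sub_mul_const_of_deriv_eq hg hG hGg]
  · exact mul_nonpos_of_nonneg_of_nonpos (hg' s) (sub_nonpos.mpr hs.le)
  · exact mul_nonneg (hg' s) (sub_nonneg.mpr hs.le)

/-- Estimate for the bulk free energy term in the discrete energy inequality:
if `g' ≥ 0` and `G'(s) = g'(s)·s`, then `(g(a) - g(b))·a ≥ G(a) - G(b)`. -/
theorem bulk_energy_estimate (g G : ℝ → ℝ)
    (hg : Differentiable ℝ g) (hG : Differentiable ℝ G)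
    (hg' : ∀ s : ℝ, 0 ≤ deriv g s)
    (hGg : ∀ s : ℝ, deriv G s = deriv g s * s) :
    ∀ a b : ℝ, (g a - g b) * a ≥ G a - G b := by
  intro a b
  have hmin : G a - g a * a ≤ G b - g b * a :=
    isMinOn_sub_mul_const_of_deriv_eq hg hG hg' hGg a (mem_univ b)
  linarith
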